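/- For every integer n ≥ 3 with n ≠ 5, Left wins the Classic Variant of the Mixed Deletion Game on the cycle C_n regardless of which player moves first. -/

import Mathlib

namespace SetTheory

/-- Pre-games, as in Mathlib's former `SetTheory.PGame`. -/
inductive PGame : Type (u + 1)
  | mk : ∀ α β : Type u, (α → PGame) → (β → PGame) → PGame

namespace PGame

instance : Zero PGame := ⟨⟨PEmpty, PEmpty, PEmpty.elim, PEmpty.elim⟩⟩

instance : One PGame := ⟨⟨PUnit, PEmpty, fun _ => 0, PEmpty.elim⟩⟩

/-- The pair `(x ≤ y, x ⧏ y)`, defined by simultaneous recursion. -/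
noncomputable def leLF : PGame.{u} → PGame.{u} → Prop × Prop :=
  fun x => PGame.rec (motive := fun _ => PGame.{u} → Prop × Prop)
    (fun _ xr _ _ IHxL IHxR y =>
      PGame.rec (motive := fun _ => Prop × Prop)
        (fun yl yr yL yR IHyL IHyR =>
          ((∀ i, (IHxL i (mk yl yr yL yR)).2) ∧ (∀ j, (IHyR j).2),
           (∃ i, (IHyL i).1) ∨ (∃ j : xr, (IHxR j (mk yl yr yL yR)).1))) y) x

noncomputable instance : LE PGame := ⟨fun x y => (leLF x y).1⟩

/-- The less or fuzzy relation on pre-games. -/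
def LF (x y : PGame) : Prop := ¬y ≤ x

infixl:50 " ⧏ " => SetTheory.PGame.LF

noncomputable instance : LT PGame := ⟨fun x y => x ≤ y ∧ x ⧏ y⟩

/-- The negation of a pre-game. -/
def neg : PGame → PGame
  | ⟨l, r, L, R⟩ => ⟨r, l, fun i => neg (R i), fun i => neg (L i)⟩

instance : Neg PGame := ⟨neg⟩

/-- Auxiliary for the sum: recursion on the right summand, given the sums for the
options of the left summand `⟨xl, xr, _, _⟩`. -/
def addAux (xl xr : Type u) (fL : xl → PGame.{u} → PGame.{u}) (fR : xr → PGame.{u} → PGame.{u}) :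
    PGame.{u} → PGame.{u}
  | mk yl yr yL yR =>
    mk (xl ⊕ yl) (xr ⊕ yr)
      (Sum.rec (fun i => fL i (mk yl yr yL yR)) (fun i => addAux xl xr fL fR (yL i)))
      (Sum.rec (fun i => fR i (mk yl yr yL yR)) (fun i => addAux xl xr fL fR (yR i)))

/-- The sum of two pre-games. -/
def add : PGame.{u} → PGame.{u} → PGame.{u}
  | mk xl xr xL xR => addAux xl xr (fun i => add (xL i)) (fun i => add (xR i))

instance : Add PGame := ⟨add⟩

/-- The pre-game `star`. -/
def star : PGame.{u} := ⟨PUnit, PUnit, fun _ => 0, fun _ => 0⟩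

/-- The pre-game `nim o`. -/
noncomputable def nim (o : Ordinal.{u}) : PGame.{u} :=
  ⟨o.ToType, o.ToType,
    fun x => nim ((Ordinal.ToType.mk (o := o)).symm x).val,
    fun x => nim ((Ordinal.ToType.mk (o := o)).symm x).val⟩
termination_by o
decreasing_by all_goals exact ((Ordinal.ToType.mk (o := o)).symm x).prop

end PGame

end SetTheory

open SetTheory PGame

namespace MixedDeletion

/-- The degree of a vertex `v` with respect to an edge set `E`. -/
def deg (E : Finset (Sym2 ℕ)) (v : ℕ) : ℕ := (E.filter (fun e => v ∈ e)).card

/-- The graph position with vertex set `V` and edge set `E` has no isolated vertex. -/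
def NoIsol (V : Finset ℕ) (E : Finset (Sym2 ℕ)) : Prop := ∀ v ∈ V, 0 < deg E v

/-- Result of Left deleting the vertex `v`: remove `v` and all incident edges. -/
def delV (V : Finset ℕ) (E : Finset (Sym2 ℕ)) (v : ℕ) : Finset ℕ × Finset (Sym2 ℕ) :=
  (V.erase v, E.filter (fun e => v ∉ e))

/-- Left may legally delete vertex `v` under the base (Classic) rules:
`v` is a vertex and the deletion creates no isolated vertex. -/
def LeftOK (V : Finset ℕ) (E : Finset (Sym2 ℕ)) (v : ℕ) : Prop :=
  v ∈ V ∧ NoIsol (V.erase v) (E.filter (fun e => v ∉ e))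

/-- Right may legally delete edge `e` under the base (Classic) rules:
`e` is an edge and the deletion creates no isolated vertex. -/
def RightOK (V : Finset ℕ) (E : Finset (Sym2 ℕ)) (e : Sym2 ℕ) : Prop :=
  e ∈ E ∧ NoIsol V (E.erase e)

/-- The Classic Variant of the Mixed Deletion Game, as a partizan game:
Left deletes a vertex (and incident edges), Right deletes an edge,
and no move may create an isolated vertex. -/
def classicG : Finset ℕ → Finset (Sym2 ℕ) → PGame
  | V, E =>
    PGame.mk {v : ℕ // LeftOK V E v} {e : Sym2 ℕ // RightOK V E e}
      (fun x => classicG (V.erase x.val) (E.filter (fun e => x.val ∉ e)))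
      (fun x => classicG V (E.erase x.val))
  termination_by V E => V.card + E.card
  decreasing_by
  · have h1 : (V.erase x.val).card < V.card := Finset.card_erase_lt_of_mem x.2.1
    have h2 : (E.filter (fun e => x.val ∉ e)).card ≤ E.card := Finset.card_filter_le _ _
    omega
  · have h1 : (E.erase x.val).card < E.card := Finset.card_erase_lt_of_mem x.2.1
    omega

/-- The Forbidden Leaf Variant: as the Classic Variant, but Left may not
delete leaf vertices (vertices of degree one). -/
def flG : Finset ℕ → Finset (Sym2 ℕ) → PGame
  | V, E =>
    PGame.mk {v : ℕ // LeftOK V E v ∧ deg E v ≠ 1} {e : Sym2 ℕ // RightOK V E e}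
      (fun x => flG (V.erase x.val) (E.filter (fun e => x.val ∉ e)))
      (fun x => flG V (E.erase x.val))
  termination_by V E => V.card + E.card
  decreasing_by
  · have h1 : (V.erase x.val).card < V.card := Finset.card_erase_lt_of_mem x.2.1.1
    have h2 : (E.filter (fun e => x.val ∉ e)).card ≤ E.card := Finset.card_filter_le _ _
    omega
  · have h1 : (E.erase x.val).card < E.card := Finset.card_erase_lt_of_mem x.2.1
    omega

/-- The Mutual Failures Variant: as the Classic Variant, but in any graph
position a player has a legal move if and only if the opponent does; i.e. a
base-rules move is legal only if the opponent also has a base-rules move. -/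
def mfG : Finset ℕ → Finset (Sym2 ℕ) → PGame
  | V, E =>
    PGame.mk {v : ℕ // LeftOK V E v ∧ ∃ e, RightOK V E e}
      {e : Sym2 ℕ // RightOK V E e ∧ ∃ v, LeftOK V E v}
      (fun x => mfG (V.erase x.val) (E.filter (fun e => x.val ∉ e)))
      (fun x => mfG V (E.erase x.val))
  termination_by V E => V.card + E.card
  decreasing_by
  · have h1 : (V.erase x.val).card < V.card := Finset.card_erase_lt_of_mem x.2.1.1
    have h2 : (E.filter (fun e => x.val ∉ e)).card ≤ E.card := Finset.card_filter_le _ _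
    omega
  · have h1 : (E.erase x.val).card < E.card := Finset.card_erase_lt_of_mem x.2.1.1
    omega

/-- Edge set of the path graph on vertices `0, 1, …, n-1`. -/
def pathE (n : ℕ) : Finset (Sym2 ℕ) := (Finset.range (n - 1)).image (fun i => s(i, i + 1))

/-- Edge set of the cycle graph on vertices `0, 1, …, n-1`. -/
def cycleE (n : ℕ) : Finset (Sym2 ℕ) := (Finset.range n).image (fun i => s(i, (i + 1) % n))

/-- Edge set of the complete graph on vertices `0, 1, …, n-1`. -/
def completeE (n : ℕ) : Finset (Sym2 ℕ) := (Finset.range n).sym2.filter (fun e => ¬ e.IsDiag)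

/-- The path position `P_n` in the Classic Variant. -/
def classicPath (n : ℕ) : PGame := classicG (Finset.range n) (pathE n)

/-- The cycle position `C_n` in the Classic Variant. -/
def classicCycle (n : ℕ) : PGame := classicG (Finset.range n) (cycleE n)

/-- The complete graph position `K_n` in the Classic Variant. -/
def classicComplete (n : ℕ) : PGame := classicG (Finset.range n) (completeE n)

/-- The path position `P_n` in the Forbidden Leaf Variant. -/
def flPath (n : ℕ) : PGame := flG (Finset.range n) (pathE n)

/-- The cycle position `C_n` in the Forbidden Leaf Variant. -/
def flCycle (n : ℕ) : PGame := flG (Finset.range n) (cycleE n)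

/-- The complete graph position `K_n` in the Forbidden Leaf Variant. -/
def flComplete (n : ℕ) : PGame := flG (Finset.range n) (completeE n)

/-- The path position `P_n` in the Mutual Failures Variant. -/
def mfPath (n : ℕ) : PGame := mfG (Finset.range n) (pathE n)

/-- The cycle position `C_n` in the Mutual Failures Variant. -/
def mfCycle (n : ℕ) : PGame := mfG (Finset.range n) (cycleE n)

/-- The complete graph position `K_n` in the Mutual Failures Variant. -/
def mfComplete (n : ℕ) : PGame := mfG (Finset.range n) (completeE n)

/-- The partizan game equal to a natural number `n`. -/
def natPG : ℕ → PGame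
  | 0 => 0
  | n + 1 => natPG n + 1

/-- The partizan game equal to an integer `z`. -/
def intPG (z : ℤ) : PGame := if 0 ≤ z then natPG z.toNat else -natPG (-z).toNat

/-- The game up, `↑ = {0 | *}`. -/
def up : PGame := PGame.mk PUnit PUnit (fun _ => 0) (fun _ => star)

/-- The game down, `↓ = {* | 0}`. -/
def down : PGame := -up

/-- The sum of `n` copies of up. -/
def natUp : ℕ → PGame
  | 0 => 0
  | n + 1 => natUp n + up

/-- The game `z·↑`: `|z|` copies of up if `z ≥ 0`, and `|z|` copies of down otherwise. -/
def zUp (z : ℤ) : PGame := if 0 ≤ z then natUp z.toNat else -natUp (-z).toNat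

/-- Two games have the same outcome: Left wins moving first in one iff in the other,
and Right wins moving first in one iff in the other. -/
def SameOutcome (A B : PGame) : Prop := (0 ⧏ A ↔ 0 ⧏ B) ∧ (A ⧏ 0 ↔ B ⧏ 0)

/-- Far-star equivalence: `G + X + ✶` and `H + X + ✶` have the same outcome for
every game `X`, where `✶` (far star) is any nim-heap `*k` with `k ≥ 2`. -/
def FarStarEquiv (G H : PGame) : Prop :=
  ∀ (X : PGame) (k : ℕ), 2 ≤ k → SameOutcome (G + X + nim k) (H + X + nim k)

/-- `G` has atomic weight `z` if `G` is far-star equivalent to `z·↑`. -/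
def AtomicWeight (G : PGame) (z : ℤ) : Prop := FarStarEquiv G (zUp z)

/-- A game is all-small if in every subposition Left has a move iff Right has a move. -/
def AllSmall : PGame → Prop
  | PGame.mk l r L R =>
    (Nonempty l ↔ Nonempty r) ∧ (∀ i, AllSmall (L i)) ∧ (∀ j, AllSmall (R j))


/-!
Both kinds of move on `C_n` leave a path: Left's leaves `P_{n-1}`, Right's leaves `P_n`. It
therefore suffices to know the outcomes of linear forests (disjoint unions of paths with at least
two vertices each), which a simultaneous induction on the size of the position settles:

* Left wins moving second unless the forest is `P₄` plus copies of `P₂`: an edge Right may delete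
  splits a path into two paths with at least two vertices each, and a path with three or more
  vertices remains unless Right splits `P₄` into `P₂ + P₂` beside copies of `P₂`.
* Left wins moving first as soon as some component has at least three vertices: deleting an end
  vertex of a longest component does not leave `P₄` plus copies of `P₂`, except when that
  component is `P₅` and all others are `P₂`; then she deletes the middle vertex of `P₅` instead.

For `n ≠ 5` the path `P_{n-1}` is not `P₄`, and `P_n` has at least three vertices.
-/

end MixedDeletion

namespace SetTheory.PGame

theorem leLF_zero_snd_iff : ∀ y : PGame,
    ((leLF 0 y).2 ↔ ¬(leLF y 0).1) ∧ ((leLF y 0).2 ↔ ¬(leLF 0 y).1)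
  | mk yl yr yL yR => by
    have ihL := fun i => leLF_zero_snd_iff (yL i)
    have ihR := fun j => leLF_zero_snd_iff (yR j)
    constructor
    · show ((∃ i, (leLF 0 (yL i)).1) ∨ ∃ j : PEmpty, _) ↔
        ¬((∀ i, (leLF (yL i) 0).2) ∧ ∀ j : PEmpty, _)
      simp [fun i => (ihL i).2]
    · show ((∃ i : PEmpty, _) ∨ ∃ j, (leLF (yR j) 0).1) ↔
        ¬((∀ i : PEmpty, _) ∧ ∀ j, (leLF 0 (yR j)).2)
      simp [fun j => (ihR j).1]

theorem zero_le_mk_iff {xl xr : Type u} {xL : xl → PGame.{u}} {xR : xr → PGame.{u}} :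
    0 ≤ mk xl xr xL xR ↔ ∀ j, 0 ⧏ xR j := by
  show ((∀ i : PEmpty, _) ∧ ∀ j, (leLF 0 (xR j)).2) ↔ _
  simp [fun j => (leLF_zero_snd_iff (xR j)).1, LF, LE.le]

theorem zero_lf_mk_iff {xl xr : Type u} {xL : xl → PGame.{u}} {xR : xr → PGame.{u}} :
    0 ⧏ mk xl xr xL xR ↔ ∃ i, 0 ≤ xL i := by
  show ¬((∀ i, (leLF (xL i) 0).2) ∧ ∀ j : PEmpty, _) ↔ _
  simp [fun i => (leLF_zero_snd_iff (xL i)).2, LE.le]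

end SetTheory.PGame

namespace MixedDeletion

theorem zero_le_classicG_iff {V : Finset ℕ} {E : Finset (Sym2 ℕ)} :
    0 ≤ classicG V E ↔ ∀ e, RightOK V E e → 0 ⧏ classicG V (E.erase e) := by
  rw [classicG, zero_le_mk_iff, Subtype.forall]

theorem zero_lf_classicG_iff {V : Finset ℕ} {E : Finset (Sym2 ℕ)} :
    0 ⧏ classicG V E ↔ ∃ v, LeftOK V E v ∧ 0 ≤ classicG (V.erase v) (E.filter (v ∉ ·)) := by
  rw [classicG, zero_lf_mk_iff, Subtype.exists]
  simp only [exists_prop]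

theorem deg_pos_iff {E : Finset (Sym2 ℕ)} {v : ℕ} : 0 < deg E v ↔ ∃ e ∈ E, v ∈ e := by
  simp [deg, Finset.card_pos, Finset.Nonempty]

def pathEdges : List ℕ → List (Sym2 ℕ)
  | a :: b :: t => s(a, b) :: pathEdges (b :: t)
  | _ => []

@[simp] theorem pathEdges_nil : pathEdges [] = [] := rfl

@[simp] theorem pathEdges_singleton (a : ℕ) : pathEdges [a] = [] := rfl

@[simp] theorem pathEdges_cons_cons (a b : ℕ) (t : List ℕ) :
    pathEdges (a :: b :: t) = s(a, b) :: pathEdges (b :: t) := rfl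

theorem mem_of_mem_pathEdges : ∀ {c : List ℕ} {e : Sym2 ℕ} {v : ℕ}, e ∈ pathEdges c → v ∈ e →
    v ∈ c
  | a :: b :: t, e, v, he, hv => by
    rcases List.mem_cons.1 he with rfl | he
    · rcases Sym2.mem_iff.1 hv with rfl | rfl <;> simp
    · exact List.mem_cons_of_mem _ (mem_of_mem_pathEdges he hv)
  | [], _, _, he, _ | [_], _, _, he, _ => by simp at he

theorem exists_mem_pathEdges : ∀ {c : List ℕ} {v : ℕ}, c.length ≠ 1 → v ∈ c →
    ∃ e ∈ pathEdges c, v ∈ e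
  | a :: b :: t, v, _, hv => by
    rcases List.mem_cons.1 hv with rfl | hv
    · exact ⟨s(v, b), by simp⟩
    · cases t with
      | nil => exact ⟨s(a, b), by simp_all⟩
      | cons =>
        obtain ⟨e, he, hve⟩ := exists_mem_pathEdges (by simp) hv
        exact ⟨e, List.mem_cons_of_mem _ he, hve⟩
  | [], _, _, hv => by simp at hv
  | [_], _, hc, _ => by simp at hc

theorem exists_eq_append_of_mem_pathEdges : ∀ {c : List ℕ} {e : Sym2 ℕ}, e ∈ pathEdges c →
    ∃ l₁ a b l₂, c = l₁ ++ a :: b :: l₂ ∧ e = s(a, b)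
  | a :: b :: t, e, he => by
    rcases List.mem_cons.1 he with rfl | he
    · exact ⟨[], a, b, t, rfl, rfl⟩
    · obtain ⟨l₁, x, y, l₂, h, rfl⟩ := exists_eq_append_of_mem_pathEdges he
      exact ⟨a :: l₁, x, y, l₂, by rw [h]; rfl, rfl⟩
  | [], _, he | [_], _, he => by simp at he

theorem pathEdges_append_cons : ∀ (l₁ l₂ : List ℕ) (v : ℕ),
    pathEdges (l₁ ++ v :: l₂) = pathEdges (l₁ ++ [v]) ++ pathEdges (v :: l₂)
  | a :: b :: t, l₂, v => by
    simp only [List.cons_append, pathEdges_cons_cons]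
    rw [← List.cons_append, pathEdges_append_cons (b :: t)]
    rfl
  | [], _, _ | [_], _, _ => rfl

theorem filter_pathEdges_cons {v : ℕ} {l : List ℕ} (hv : v ∉ l) :
    (pathEdges (v :: l)).filter (v ∉ ·) = pathEdges l := by
  have hl : ∀ e ∈ pathEdges l, v ∉ e := fun e he hve => hv (mem_of_mem_pathEdges he hve)
  cases l with
  | nil => rfl
  | cons b t =>
    rw [pathEdges_cons_cons, List.filter_cons_of_neg (by simp), List.filter_eq_self.2]
    simpa using hl

theorem filter_pathEdges_append_singleton {v : ℕ} : ∀ {l : List ℕ}, v ∉ l →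
    (pathEdges (l ++ [v])).filter (v ∉ ·) = pathEdges l
  | a :: b :: t, hv => by
    simp only [List.mem_cons, not_or] at hv
    rw [List.cons_append, List.cons_append, pathEdges_cons_cons, ← List.cons_append,
      List.filter_cons_of_pos (by simp [hv.1, hv.2.1]),
      filter_pathEdges_append_singleton (by simp [hv.2.1, hv.2.2]), pathEdges_cons_cons]
  | [a], hv => by simp_all
  | [], _ => rfl

theorem pathEdges_map (f : ℕ → ℕ) : ∀ l : List ℕ,
    pathEdges (l.map f) = (pathEdges l).map (Sym2.map f)
  | a :: b :: t => by simp [← pathEdges_map f (b :: t)]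
  | [] | [_] => rfl

theorem pathEdges_range (n : ℕ) :
    pathEdges (List.range n) = (List.range (n - 1)).map fun i => s(i, i + 1) := by
  induction n with
  | zero => rfl
  | succ n ih =>
    cases n with
    | zero => rfl
    | succ n =>
      rw [List.range_succ, List.range_succ, List.append_assoc, List.singleton_append,
        pathEdges_append_cons, ← List.range_succ, ih]
      simp [List.range_succ]

/- A position is encoded by the vertex lists of its paths, one list per component. Empty
components are allowed, so that deleting any vertex of a path leaves two components. -/
def forestVerts (L : List (List ℕ)) : Finset ℕ := L.flatten.toFinset

def forestEdges (L : List (List ℕ)) : Finset (Sym2 ℕ) := (L.flatMap pathEdges).toFinset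

structure IsLinearForest (L : List (List ℕ)) : Prop where
  nodup : L.flatten.Nodup
  length_ne_one : ∀ c ∈ L, c.length ≠ 1

def forestGame (L : List (List ℕ)) : PGame := classicG (forestVerts L) (forestEdges L)

def forestSize (L : List (List ℕ)) : ℕ := (forestVerts L).card + (forestEdges L).card

def longSizes (L : List (List ℕ)) : Multiset ℕ := Multiset.filter (2 < ·) (L.map List.length)

theorem mem_forestVerts {L : List (List ℕ)} {v : ℕ} : v ∈ forestVerts L ↔ ∃ c ∈ L, v ∈ c := by
  simp [forestVerts]

theorem mem_forestEdges {L : List (List ℕ)} {e : Sym2 ℕ} :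
    e ∈ forestEdges L ↔ ∃ c ∈ L, e ∈ pathEdges c := by
  simp [forestEdges]

theorem mem_longSizes {L : List (List ℕ)} {n : ℕ} :
    n ∈ longSizes L ↔ 2 < n ∧ ∃ c ∈ L, c.length = n := by
  simp [longSizes, and_comm]

theorem longSizes_cons (c : List ℕ) (M : List (List ℕ)) :
    longSizes (c :: M) = (if 2 < c.length then {c.length} else 0) + longSizes M := by
  rw [longSizes, List.map_cons, ← Multiset.cons_coe, Multiset.filter_cons]
  rfl

theorem longSizes_eq_zero {L : List (List ℕ)} : longSizes L = 0 ↔ ∀ c ∈ L, c.length ≤ 2 := by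
  simp [longSizes]

section Perm

variable {L L' : List (List ℕ)}

theorem forestVerts_eq_of_perm (hp : L.Perm L') : forestVerts L = forestVerts L' :=
  List.toFinset_eq_of_perm _ _ hp.flatten

theorem forestEdges_eq_of_perm (hp : L.Perm L') : forestEdges L = forestEdges L' :=
  List.toFinset_eq_of_perm _ _ (hp.flatMap_right _)

theorem forestGame_eq_of_perm (hp : L.Perm L') : forestGame L = forestGame L' := by
  rw [forestGame, forestGame, forestVerts_eq_of_perm hp, forestEdges_eq_of_perm hp]

theorem forestSize_eq_of_perm (hp : L.Perm L') : forestSize L = forestSize L' := by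
  rw [forestSize, forestSize, forestVerts_eq_of_perm hp, forestEdges_eq_of_perm hp]

theorem longSizes_eq_of_perm (hp : L.Perm L') : longSizes L = longSizes L' := by
  rw [longSizes, longSizes, Multiset.coe_eq_coe.2 (hp.map _)]

theorem IsLinearForest.of_perm (hL : IsLinearForest L) (hp : L.Perm L') : IsLinearForest L' :=
  ⟨hp.flatten.nodup_iff.1 hL.nodup, fun c hc => hL.length_ne_one c (hp.mem_iff.2 hc)⟩

end Perm

theorem eq_of_nodup_flatten {L : List (List ℕ)} (h : L.flatten.Nodup) {c d : List ℕ} (hc : c ∈ L)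
    (hd : d ∈ L) {v : ℕ} (hvc : v ∈ c) (hvd : v ∈ d) : c = d := by
  have : Std.Symm (@List.Disjoint ℕ) := ⟨fun _ _ h => h.symm⟩
  by_contra hne
  exact (List.nodup_flatten.1 h).2.forall hc hd hne hvc hvd

theorem IsLinearForest.noIsol {L : List (List ℕ)} (hL : IsLinearForest L) :
    NoIsol (forestVerts L) (forestEdges L) := by
  intro v hv
  obtain ⟨c, hc, hvc⟩ := mem_forestVerts.1 hv
  obtain ⟨e, he, hve⟩ := exists_mem_pathEdges (hL.length_ne_one c hc) hvc
  exact deg_pos_iff.2 ⟨e, mem_forestEdges.2 ⟨c, hc, he⟩, hve⟩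

theorem IsLinearForest.of_noIsol {L : List (List ℕ)} (hnd : L.flatten.Nodup)
    (h : NoIsol (forestVerts L) (forestEdges L)) : IsLinearForest L := by
  refine ⟨hnd, fun c hc hlen => ?_⟩
  obtain ⟨v, rfl⟩ := List.length_eq_one_iff.1 hlen
  obtain ⟨e, he, hve⟩ := deg_pos_iff.1 (h v (mem_forestVerts.2 ⟨_, hc, by simp⟩))
  obtain ⟨d, hd, hed⟩ := mem_forestEdges.1 he
  obtain rfl := eq_of_nodup_flatten hnd hd hc (mem_of_mem_pathEdges hed hve) (by simp)
  simp at hed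

section Moves

variable {l₁ l₂ : List ℕ} {M : List (List ℕ)}

theorem flatten_append_cons_perm (v : ℕ) :
    ((l₁ ++ v :: l₂) :: M).flatten.Perm (v :: (l₁ :: l₂ :: M).flatten) := by
  simp [List.perm_middle]

theorem forestVerts_erase {v : ℕ} (h : ((l₁ ++ v :: l₂) :: M).flatten.Nodup) :
    (forestVerts ((l₁ ++ v :: l₂) :: M)).erase v = forestVerts (l₁ :: l₂ :: M) := by
  have hp := flatten_append_cons_perm (l₁ := l₁) (l₂ := l₂) (M := M) v
  rw [forestVerts, List.toFinset_eq_of_perm _ _ hp, List.toFinset_cons,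
    Finset.erase_insert (by simpa using (List.nodup_cons.1 (hp.nodup_iff.1 h)).1)]
  rfl

theorem forestEdges_filter {v : ℕ} (h : ((l₁ ++ v :: l₂) :: M).flatten.Nodup) :
    (forestEdges ((l₁ ++ v :: l₂) :: M)).filter (v ∉ ·) = forestEdges (l₁ :: l₂ :: M) := by
  have hv := (List.nodup_cons.1 ((flatten_append_cons_perm v).nodup_iff.1 h)).1
  simp only [List.flatten_cons, List.mem_append, not_or] at hv
  have hM : ∀ e ∈ M.flatMap pathEdges, v ∉ e := fun e he hve => by
    obtain ⟨c, hc, hec⟩ := List.mem_flatMap.1 he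
    exact hv.2.2 (List.mem_flatten.2 ⟨c, hc, mem_of_mem_pathEdges hec hve⟩)
  have hfilter : (((l₁ ++ v :: l₂) :: M).flatMap pathEdges).filter (v ∉ ·) =
      (l₁ :: l₂ :: M).flatMap pathEdges := by
    rw [List.flatMap_cons, pathEdges_append_cons, List.filter_append, List.filter_append,
      filter_pathEdges_append_singleton hv.1, filter_pathEdges_cons hv.2.1,
      List.filter_eq_self.2 (by simpa using hM)]
    simp
  ext e
  simp only [forestEdges, ← hfilter, Finset.mem_filter, List.mem_toFinset, List.mem_filter,
    decide_eq_true_eq]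

theorem forestVerts_split (a b : ℕ) :
    forestVerts ((l₁ ++ [a]) :: (b :: l₂) :: M) = forestVerts ((l₁ ++ a :: b :: l₂) :: M) := by
  simp [forestVerts]

theorem forestEdges_erase {a b : ℕ} (h : ((l₁ ++ a :: b :: l₂) :: M).flatten.Nodup) :
    (forestEdges ((l₁ ++ a :: b :: l₂) :: M)).erase s(a, b) =
      forestEdges ((l₁ ++ [a]) :: (b :: l₂) :: M) := by
  have hdisj : (l₁ ++ [a]).Disjoint (b :: l₂ ++ M.flatten) :=
    List.disjoint_of_nodup_append (by simpa using h)
  have hperm : (((l₁ ++ a :: b :: l₂) :: M).flatMap pathEdges).Perm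
      (s(a, b) :: ((l₁ ++ [a]) :: (b :: l₂) :: M).flatMap pathEdges) := by
    rw [List.flatMap_cons, pathEdges_append_cons, pathEdges_cons_cons]
    simp [List.perm_middle]
  rw [forestEdges, List.toFinset_eq_of_perm _ _ hperm, List.toFinset_cons, Finset.erase_insert]
  · rfl
  simp only [List.mem_toFinset, List.mem_flatMap, List.mem_cons]
  rintro ⟨c, rfl | rfl | hc, hec⟩
  · exact hdisj (mem_of_mem_pathEdges hec (Sym2.mem_mk_right a b)) (by simp)
  · exact hdisj (by simp) (List.mem_append_left _ (mem_of_mem_pathEdges hec (Sym2.mem_mk_left a b)))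
  · exact hdisj (by simp) (List.mem_append_right _
      (List.mem_flatten.2 ⟨c, hc, mem_of_mem_pathEdges hec (Sym2.mem_mk_left a b)⟩))

theorem forestSize_delete_vertex_lt {v : ℕ} (h : ((l₁ ++ v :: l₂) :: M).flatten.Nodup) :
    forestSize (l₁ :: l₂ :: M) < forestSize ((l₁ ++ v :: l₂) :: M) := by
  have hv : v ∈ forestVerts ((l₁ ++ v :: l₂) :: M) :=
    mem_forestVerts.2 ⟨l₁ ++ v :: l₂, by simp, by simp⟩
  rw [forestSize, forestSize, ← forestVerts_erase h, ← forestEdges_filter h,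
    Finset.card_erase_of_mem hv]
  have := Finset.card_pos.2 ⟨v, hv⟩
  have := Finset.card_filter_le (forestEdges ((l₁ ++ v :: l₂) :: M)) (v ∉ ·)
  omega

theorem forestSize_split_lt {a b : ℕ} (h : ((l₁ ++ a :: b :: l₂) :: M).flatten.Nodup) :
    forestSize ((l₁ ++ [a]) :: (b :: l₂) :: M) < forestSize ((l₁ ++ a :: b :: l₂) :: M) := by
  have he : s(a, b) ∈ forestEdges ((l₁ ++ a :: b :: l₂) :: M) :=
    mem_forestEdges.2 ⟨l₁ ++ a :: b :: l₂, by simp, by rw [pathEdges_append_cons]; simp⟩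
  rw [forestSize, forestSize, ← forestEdges_erase h, forestVerts_split,
    Finset.card_erase_of_mem he]
  have := Finset.card_pos.2 ⟨_, he⟩
  omega

theorem IsLinearForest.delete_vertex {v : ℕ} (hL : IsLinearForest ((l₁ ++ v :: l₂) :: M))
    (h₁ : l₁.length ≠ 1) (h₂ : l₂.length ≠ 1) : IsLinearForest (l₁ :: l₂ :: M) := by
  refine ⟨(List.nodup_cons.1 ((flatten_append_cons_perm v).nodup_iff.1 hL.nodup)).2, ?_⟩
  simp only [List.mem_cons, forall_eq_or_imp]
  exact ⟨h₁, h₂, fun c hc => hL.length_ne_one c (List.mem_cons_of_mem _ hc)⟩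

/- `X` holds edges at `v` off the paths, such as the closing edge of a cycle. -/
theorem zero_lf_classicG_of_delete_vertex {v : ℕ} {X : Finset (Sym2 ℕ)} (hX : ∀ e ∈ X, v ∈ e)
    (h : ((l₁ ++ v :: l₂) :: M).flatten.Nodup) (hL : IsLinearForest (l₁ :: l₂ :: M))
    (hwin : 0 ≤ forestGame (l₁ :: l₂ :: M)) :
    0 ⧏ classicG (forestVerts ((l₁ ++ v :: l₂) :: M)) (X ∪ forestEdges ((l₁ ++ v :: l₂) :: M)) := by
  have hE : (X ∪ forestEdges ((l₁ ++ v :: l₂) :: M)).filter (v ∉ ·) =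
      forestEdges (l₁ :: l₂ :: M) := by
    rw [Finset.filter_union, Finset.filter_false_of_mem (by simpa using hX), Finset.empty_union,
      forestEdges_filter h]
  rw [zero_lf_classicG_iff]
  refine ⟨v, ⟨mem_forestVerts.2 ⟨l₁ ++ v :: l₂, by simp, by simp⟩, ?_⟩, ?_⟩ <;>
    rw [forestVerts_erase h, hE]
  exacts [hL.noIsol, hwin]

theorem exists_delete_vertex_longSizes_ne (l : List ℕ) (hl : 2 < l.length)
    (hmax : ∀ d ∈ M, d.length ≤ l.length) :
    ∃ l₁ v l₂, l = l₁ ++ v :: l₂ ∧ l₁.length ≠ 1 ∧ l₂.length ≠ 1 ∧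
      longSizes (l₁ :: l₂ :: M) ≠ {4} := by
  by_cases h5 : l.length = 5 ∧ longSizes M = 0
  · refine ⟨l.take 2, l[2], l.drop 3, ?_, by simp; omega, by simp; omega, ?_⟩
    · rw [← List.drop_eq_getElem_cons, List.take_append_drop]
    · simp [longSizes_cons, h5]
  · obtain ⟨v, t, rfl⟩ := List.exists_cons_of_length_pos (by omega : 0 < l.length)
    simp only [List.length_cons] at hl hmax h5
    refine ⟨[], v, t, rfl, by simp, by omega, fun h => ?_⟩
    rw [longSizes_cons, longSizes_cons, if_neg (by simp), zero_add] at h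
    split_ifs at h with ht
    · rw [Multiset.singleton_add, eq_comm, Multiset.singleton_eq_cons_iff] at h
      exact h5 ⟨by omega, h.2⟩
    · obtain ⟨-, d, hd, hd4⟩ := mem_longSizes.1 (h ▸ Multiset.mem_singleton_self 4)
      have := hmax d hd
      omega

end Moves

theorem zero_lf_forestGame_of_forall_lt {L : List (List ℕ)} (hL : IsLinearForest L)
    (hlong : longSizes L ≠ 0)
    (ih : ∀ L', IsLinearForest L' → forestSize L' < forestSize L → longSizes L' ≠ {4} →
      0 ≤ forestGame L') :
    0 ⧏ forestGame L := by
  obtain ⟨d, hd, hd2⟩ : ∃ d ∈ L, 2 < d.length := by simpa [longSizes_eq_zero] using hlong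
  obtain ⟨l, hl, hmax⟩ := L.toFinset.exists_max_image List.length ⟨d, List.mem_toFinset.2 hd⟩
  rw [List.mem_toFinset] at hl
  have hp := List.perm_cons_erase hl
  obtain ⟨l₁, v, l₂, rfl, h₁, h₂, hne⟩ := exists_delete_vertex_longSizes_ne (M := L.erase l) l
    (lt_of_lt_of_le hd2 (hmax d (List.mem_toFinset.2 hd)))
    (fun d hd => hmax d (List.mem_toFinset.2 (List.mem_of_mem_erase hd)))
  replace hL := hL.of_perm hp
  have hL' := hL.delete_vertex h₁ h₂
  rw [forestGame_eq_of_perm hp, forestGame, ← Finset.empty_union (forestEdges _)]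
  refine zero_lf_classicG_of_delete_vertex (by simp) hL.nodup hL' (ih _ hL' ?_ hne)
  exact forestSize_eq_of_perm hp ▸ forestSize_delete_vertex_lt hL.nodup

theorem zero_le_forestGame_of_forall_lt {L : List (List ℕ)} (hL : IsLinearForest L)
    (h4 : longSizes L ≠ {4})
    (ih : ∀ L', IsLinearForest L' → forestSize L' < forestSize L → longSizes L' ≠ 0 →
      0 ⧏ forestGame L') :
    0 ≤ forestGame L := by
  rw [forestGame, zero_le_classicG_iff]
  rintro e ⟨he, hiso⟩
  obtain ⟨c, hc, hec⟩ := mem_forestEdges.1 he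
  obtain ⟨l₁, a, b, l₂, rfl, rfl⟩ := exists_eq_append_of_mem_pathEdges hec
  have hp := List.perm_cons_erase hc
  set M := L.erase (l₁ ++ a :: b :: l₂)
  replace hL := hL.of_perm hp
  rw [longSizes_eq_of_perm hp] at h4
  rw [forestVerts_eq_of_perm hp, forestEdges_eq_of_perm hp, forestEdges_erase hL.nodup,
    ← forestVerts_split] at hiso ⊢
  have hL' : IsLinearForest ((l₁ ++ [a]) :: (b :: l₂) :: M) :=
    .of_noIsol (by simpa using hL.nodup) hiso
  refine ih _ hL' (forestSize_eq_of_perm hp ▸ forestSize_split_lt hL.nodup) fun h0 => h4 ?_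
  have h₁ := hL'.length_ne_one (l₁ ++ [a]) (by simp)
  have h₂ := hL'.length_ne_one (b :: l₂) (by simp)
  simp only [longSizes_eq_zero, List.mem_cons, forall_eq_or_imp] at h0
  simp only [List.length_append, List.length_cons, List.length_nil] at h₁ h₂ h0
  obtain ⟨hl₁, hl₂⟩ : l₁.length = 1 ∧ l₂.length = 1 := by omega
  simp [longSizes_cons, longSizes_eq_zero.2 h0.2.2, hl₁, hl₂]

theorem forestGame_outcome (L : List (List ℕ)) (hL : IsLinearForest L) :
    (longSizes L ≠ {4} → 0 ≤ forestGame L) ∧ (longSizes L ≠ 0 → 0 ⧏ forestGame L) := by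
  induction hs : forestSize L using Nat.strong_induction_on generalizing L with
  | _ s ih =>
    subst hs
    exact ⟨fun h4 => zero_le_forestGame_of_forall_lt hL h4 fun L' hL' hlt =>
        (ih _ hlt L' hL' rfl).2,
      fun h0 => zero_lf_forestGame_of_forall_lt hL h0 fun L' hL' hlt => (ih _ hlt L' hL' rfl).1⟩

theorem add_one_mod_of_lt {i n : ℕ} (h : i < n) :
    (i + 1) % n = if i + 1 = n then 0 else i + 1 := by
  split_ifs with h'
  · rw [h', Nat.mod_self]
  · exact Nat.mod_eq_of_lt (by omega)

theorem cycleEdge_injective {n : ℕ} (hn : 3 ≤ n) :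
    Function.Injective fun i => s(i, (i + 1) % n) := by
  intro i i' h
  rcases Sym2.eq_iff.1 h with ⟨h₁, -⟩ | ⟨h₁, h₂⟩
  · exact h₁
  · have hi : i < n := h₁ ▸ Nat.mod_lt _ (by omega)
    have hi' : i' < n := h₂ ▸ Nat.mod_lt _ (by omega)
    rw [add_one_mod_of_lt hi'] at h₁
    rw [add_one_mod_of_lt hi] at h₂
    split_ifs at h₁ h₂ <;> omega

theorem exists_path_eq_cycleE_erase {n : ℕ} (hn : 3 ≤ n) {e : Sym2 ℕ} (he : e ∈ cycleE n) :
    ∃ v t, IsLinearForest [v :: t] ∧ t.length = n - 1 ∧ v ∈ e ∧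
      forestVerts [v :: t] = Finset.range n ∧ forestEdges [v :: t] = (cycleE n).erase e := by
  obtain ⟨j, hj, rfl⟩ : ∃ j < n, s(j, (j + 1) % n) = e := by simpa [cycleE] using he
  -- the path runs once around the cycle, starting just after the deleted edge
  set σ : ℕ → ℕ := fun k => (j + 1 + k) % n with hσ
  have hinj : Set.InjOn σ (Finset.range n) := fun k₁ hk₁ k₂ hk₂ h => by
    simp only [Finset.coe_range, Set.mem_Iio] at hk₁ hk₂
    have := Nat.ModEq.add_left_cancel' (j + 1) h
    rwa [Nat.ModEq, Nat.mod_eq_of_lt hk₁, Nat.mod_eq_of_lt hk₂] at this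
  have hlt : ∀ k, σ k < n := fun k => Nat.mod_lt _ (by omega)
  have hlast : σ (n - 1) = j := by
    show (j + 1 + (n - 1)) % n = j
    rw [show j + 1 + (n - 1) = j + n by omega, Nat.add_mod_right, Nat.mod_eq_of_lt hj]
  have hsucc : ∀ k, σ (k + 1) = (σ k + 1) % n := fun k => by
    simp only [hσ, Nat.mod_add_mod, add_assoc]
  have hrange : (Finset.range n).image σ = Finset.range n := by
    refine Finset.eq_of_subset_of_card_le (fun x hx => ?_) (Finset.card_image_of_injOn hinj).ge
    obtain ⟨k, -, rfl⟩ := Finset.mem_image.1 hx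
    exact Finset.mem_range.2 (hlt k)
  have himage : (Finset.range (n - 1)).image σ = (Finset.range n).erase j := by
    refine Finset.eq_of_subset_of_card_le (fun x hx => ?_) ?_
    · obtain ⟨k, hk, rfl⟩ := Finset.mem_image.1 hx
      rw [Finset.mem_range] at hk
      refine Finset.mem_erase.2 ⟨fun h => ?_, Finset.mem_range.2 (hlt k)⟩
      have := hinj (by simp only [Finset.coe_range, Set.mem_Iio]; omega)
        (by simp only [Finset.coe_range, Set.mem_Iio]; omega) (h.trans hlast.symm)
      omega
    · rw [Finset.card_image_of_injOn (hinj.mono (by simp)),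
        Finset.card_erase_of_mem (by simpa using hj)]
      simp
  have hc : (List.range n).map σ = σ 0 :: (List.range (n - 1)).map (σ ∘ Nat.succ) := by
    obtain ⟨m, rfl⟩ : ∃ m, n = m + 1 := ⟨n - 1, by omega⟩
    simp [List.range_succ_eq_map]
  refine ⟨σ 0, (List.range (n - 1)).map (σ ∘ Nat.succ), ?_, by simp, by simp [hσ], ?_, ?_⟩ <;>
    rw [← hc]
  · refine ⟨by simpa using List.Nodup.map_on (fun x hx y hy => hinj (by simpa using hx)
      (by simpa using hy)) List.nodup_range, by simp; omega⟩
  · rw [← hrange]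
    ext x
    simp [forestVerts]
  · simp only [forestEdges, List.flatMap_singleton]
    rw [pathEdges_map, pathEdges_range, List.map_map, cycleE,
      ← Finset.image_erase (cycleEdge_injective hn), ← himage, Finset.image_image]
    ext x
    simp [hsucc]

/-- For every `n ≥ 3` with `n ≠ 5`, Left wins the Classic Variant on the cycle
`C_n` regardless of which player moves first. -/
theorem classic_cycle_left_wins : ∀ n : ℕ, 3 ≤ n → n ≠ 5 → 0 < classicCycle n := by
  intro n h3 h5
  refine ⟨?_, ?_⟩
  · rw [classicCycle, zero_le_classicG_iff]
    rintro e ⟨he, -⟩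
    obtain ⟨v, t, hL, ht, -, hV, hE⟩ := exists_path_eq_cycleE_erase h3 he
    rw [← hV, ← hE]
    exact (forestGame_outcome _ hL).2 (by simp [longSizes, ht]; omega)
  · have he : s(0, 1) ∈ cycleE n :=
      Finset.mem_image.2 ⟨0, by simp; omega, by simp [Nat.mod_eq_of_lt (by omega : 1 < n)]⟩
    obtain ⟨v, t, hL, ht, hv, hV, hE⟩ := exists_path_eq_cycleE_erase h3 he
    have hL' := hL.delete_vertex (l₁ := []) (by simp) (by omega)
    have h4 : longSizes [[], t] ≠ {4} := fun h => by
      obtain ⟨-, c, hc, hc4⟩ := mem_longSizes.1 (h ▸ Multiset.mem_singleton_self 4)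
      simp only [List.mem_cons, List.not_mem_nil, or_false] at hc
      rcases hc with rfl | rfl
      · simp at hc4
      · omega
    rw [classicCycle, ← hV, ← Finset.insert_erase he, ← hE, Finset.insert_eq]
    exact zero_lf_classicG_of_delete_vertex (by simpa using hv) hL.nodup hL'
      ((forestGame_outcome _ hL').1 h4)

end MixedDeletion
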